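/- arXiv:2605.02193 — 2 statements merged into one kernel-verified Lean document; each statement's English description precedes it below -/
import Mathlib

section
/- For every integer a ≥ 1, the coefficient sequence of the polynomial x(1+x)^a + x^a is log-concave: writing x(1+x)^a + x^a = Σ_j c_j x^j, one has c_j^2 ≥ c_{j−1} c_{j+1} for all j ≥ 1. In particular the coefficients satisfy c_{j+1} = C(a, j) + [j+1 = a] for 1 ≤ j+1 ≤ a+1 in the range where the two summands overlap, and the only nontrivial verification beyond the log-concavity of binomial coefficients is C(a,2)^2 ≥ C(a,3)·(a+1). -/
open Polynomial

private lemma two_mul_choose_two' (n : ℕ) : 2 * (n+1).choose 2 = (n+1) * n := by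
  induction n with
  | zero => rfl
  | succ m ih =>
    rw [Nat.choose_succ_succ (m+1) 1]
    simp only [Nat.choose_one_right, Nat.mul_add]
    nlinarith [ih]

private lemma six_mul_choose_three' (n : ℕ) : 6 * (n+2).choose 3 = (n+2) * (n+1) * n := by
  induction n with
  | zero => rfl
  | succ m ih =>
    rw [Nat.choose_succ_succ (m+2) 2]
    simp only [Nat.mul_add]
    nlinarith [ih, two_mul_choose_two' (m+1)]

private lemma key_ineq (a : ℕ) : a.choose 3 * (a + 1) ≤ a.choose 2 ^ 2 := by
  rcases Nat.lt_or_ge a 3 with h | h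
  · rw [Nat.choose_eq_zero_of_lt h]; simp
  · obtain ⟨n, rfl⟩ := Nat.exists_eq_add_of_le h
    have e2 : 3 + n = n + 3 := by ring
    rw [e2]
    have h2 := two_mul_choose_two' (n + 2)
    have h3 := six_mul_choose_three' (n + 1)
    have e3 : n + 1 + 2 = n + 3 := by ring
    have e4 : n + 2 + 1 = n + 3 := by ring
    rw [e3] at h3; rw [e4] at h2
    nlinarith [h2, h3]

private lemma choose_lc (n k : ℕ) : n.choose k * n.choose (k+2) ≤ n.choose (k+1) ^ 2 := by
  rcases Nat.lt_or_ge n (k+2) with h | h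
  · rw [Nat.choose_eq_zero_of_lt h]; simp
  · have h1 := Nat.choose_succ_right_eq n k
    have h2 := Nat.choose_succ_right_eq n (k+1)
    have key : n.choose k * n.choose (k+2) * ((k+2) * (n-k)) =
        n.choose (k+1) ^ 2 * ((k+1) * (n-(k+1))) := by
      calc n.choose k * n.choose (k+2) * ((k+2) * (n-k))
          = (n.choose k * (n-k)) * (n.choose (k+1+1) * (k+1+1)) := by ring
        _ = (n.choose (k+1) * (k+1)) * (n.choose (k+1) * (n-(k+1))) := by rw [← h1, h2]
        _ = n.choose (k+1) ^ 2 * ((k+1) * (n-(k+1))) := by ring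
    have hle : n.choose k * n.choose (k+2) * ((k+2) * (n-k)) ≤
        n.choose (k+1) ^ 2 * ((k+2) * (n-k)) := by
      rw [key]
      exact Nat.mul_le_mul_left _ (Nat.mul_le_mul (by omega) (by omega))
    exact Nat.le_of_mul_le_mul_right hle (Nat.mul_pos (by omega) (by omega))

private lemma coeff_p (a k : ℕ) :
    ((X : Polynomial ℤ) * (1 + X) ^ a + X ^ a).coeff (k + 1) =
      (a.choose k : ℤ) + if k + 1 = a then 1 else 0 := by
  rw [coeff_add, coeff_X_mul, coeff_one_add_X_pow, coeff_X_pow]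

private lemma coeff_p0 (a : ℕ) (ha : 1 ≤ a) :
    ((X : Polynomial ℤ) * (1 + X) ^ a + X ^ a).coeff 0 = 0 := by
  have h : a ≠ 0 := by omega
  rw [coeff_add, mul_coeff_zero, coeff_X_zero, coeff_X_pow]
  simp [h, eq_comm]

/-- For every `a ≥ 1` the coefficients of `x(1+x)^a + x^a` are log-concave.  Moreover the
coefficients satisfy `c_{j+1} = C(a,j) + [j+1 = a]` in the overlapping range, and the
binomial inequality `C(a,2)^2 ≥ C(a,3)(a+1)` holds. -/
theorem single_spine_log_concave (a : ℕ) (ha : 1 ≤ a) :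
    (∀ j : ℕ, 1 ≤ j →
      ((X : Polynomial ℤ) * (1 + X) ^ a + X ^ a).coeff (j - 1) *
          ((X : Polynomial ℤ) * (1 + X) ^ a + X ^ a).coeff (j + 1) ≤
        ((X : Polynomial ℤ) * (1 + X) ^ a + X ^ a).coeff j ^ 2) ∧
    (∀ j : ℕ, j + 1 ≤ a + 1 →
      ((X : Polynomial ℤ) * (1 + X) ^ a + X ^ a).coeff (j + 1) =
        (a.choose j : ℤ) + if j + 1 = a then 1 else 0) ∧
    ((a.choose 3 : ℤ) * (a + 1) ≤ (a.choose 2 : ℤ) ^ 2) := by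
  refine ⟨?_, fun j _ => coeff_p a j, ?_⟩
  · intro j hj
    match j, hj with
    | 1, _ =>
      rw [Nat.sub_self, coeff_p0 a ha, zero_mul]
      positivity
    | (m+2), _ =>
      have e : m + 2 - 1 = m + 1 := rfl
      rw [e, coeff_p a m, coeff_p a (m+1), coeff_p a (m+2)]
      have base : ((a.choose m : ℤ)) * (a.choose (m+2) : ℤ) ≤ (a.choose (m+1) : ℤ) ^ 2 := by
        exact_mod_cast choose_lc a m
      have hm : (0:ℤ) ≤ (a.choose m : ℤ) := Int.natCast_nonneg _
      have hm1 : (0:ℤ) ≤ (a.choose (m+1) : ℤ) := Int.natCast_nonneg _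
      have hm2 : (0:ℤ) ≤ (a.choose (m+2) : ℤ) := Int.natCast_nonneg _
      by_cases h1 : m + 1 = a
      · have hz : (a.choose (m+2) : ℤ) = 0 := by
          rw [Nat.choose_eq_zero_of_lt (by omega)]; norm_num
        rw [if_pos h1, if_neg (show ¬ m+1+1 = a by omega),
            if_neg (show ¬ m+2+1 = a by omega), hz]
        nlinarith
      · by_cases h2 : m + 1 + 1 = a
        · rw [if_neg h1, if_pos h2, if_neg (show ¬ m+2+1 = a by omega)]
          nlinarith
        · by_cases h3 : m + 2 + 1 = a
          · rw [if_neg h1, if_neg h2, if_pos h3]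
            have ham : a.choose m = a.choose 3 := by
              rw [← Nat.choose_symm (show m ≤ a by omega)]
              congr 1; omega
            have ham1 : a.choose (m+1) = a.choose 2 := by
              rw [← Nat.choose_symm (show m+1 ≤ a by omega)]
              congr 1; omega
            have ham2 : a.choose (m+2) = a := by
              have h' : a.choose (m+2) = a.choose 1 := by
                rw [← Nat.choose_symm (show m+2 ≤ a by omega)]
                congr 1; omega
              simpa using h'
            rw [ham, ham1, ham2]
            have hk : ((a.choose 3 : ℤ)) * ((a:ℤ) + 1) ≤ (a.choose 2 : ℤ) ^ 2 := by
              exact_mod_cast key_ineq a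
            nlinarith
          · rw [if_neg h1, if_neg h2, if_neg h3]
            nlinarith
  · exact_mod_cast key_ineq a
end

section
/- Fix an integer r ≥ 0. With P_t := (1+3x+x^2)^t, Q_t := (2+3x+x^2)^t, R_t := (P_t − (1+x)^t)/x, U_t := (P_t + x·Q_t)^3 and V_t := (Q_t + R_t)^3 − R_t^3, there exist K ≥ 0, constants c, C > 0 and t_0 such that for all integers t ≥ t_0: c · t^{−K} · 2^{3t} ≤ [x^r] V_t ≤ C · t^K · 2^{3t}, and c · t^{−K} · 2^{min(r,3)·t} ≤ [x^r] U_t ≤ C · t^K · 2^{min(r,3)·t}. -/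
open Polynomial

/-- `P_t := (1+3x+x^2)^t`. -/
noncomputable def Ppoly (t : ℕ) : Polynomial ℤ := (1 + 3 * X + X ^ 2) ^ t

/-- `Q_t := (2+3x+x^2)^t`. -/
noncomputable def Qpoly (t : ℕ) : Polynomial ℤ := (2 + 3 * X + X ^ 2) ^ t

/-- `R_t := (P_t - (1+x)^t)/x`, a genuine polynomial since `P_t` and `(1+x)^t` have equal
constant terms (here realized as division by the monic polynomial `X`). -/
noncomputable def Rpoly (t : ℕ) : Polynomial ℤ := (Ppoly t - (1 + X) ^ t) /ₘ X

/-- `U_t := (P_t + x·Q_t)^3`. -/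
noncomputable def Upoly (t : ℕ) : Polynomial ℤ := (Ppoly t + X * Qpoly t) ^ 3

/-- `V_t := (Q_t + R_t)^3 - R_t^3`. -/
noncomputable def Vpoly (t : ℕ) : Polynomial ℤ := (Qpoly t + Rpoly t) ^ 3 - Rpoly t ^ 3

/-!
Coefficientwise, `1 + x ≤ 1 + 3x + x² ≤ (1 + x)³`, `2(1 + x) ≤ 2 + 3x + x² ≤ 2(1 + x)²` and
`0 ≤ x R_t = P_t - (1 + x)^t ≤ (1 + x)^{3t}`. Multiplying such inequalities between polynomials
with nonnegative coefficients squeezes every product `P_t^a Q_t^b (x R_t)^c` between multiples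
of the form `2^{tb} (1 + x)^M`, and `[x^n] (1 + x)^M = binom(M, n)` lies between `1` and
`M^n ≤ (9t)^n` once `n ≤ M ≤ 9t`. Expand `U_t` and `V_t = Q_t³ + 3 Q_t² R_t + 3 Q_t R_t²`
binomially: the lower bound for `[x^r] U_t` comes from the term `x^k P_t^{3-k} Q_t^k` with
`k = min(r, 3)`, the terms with `k > r` do not reach `x^r`, and `Q_t³` carries the lower bound
for `V_t`.
-/

section CoeffLE

variable {R : Type*} [Semiring R] [PartialOrder R]

def CoeffLE (f g : R[X]) : Prop := ∀ n, f.coeff n ≤ g.coeff n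

theorem CoeffLE.refl (f : R[X]) : CoeffLE f f := fun _ => le_rfl

theorem CoeffLE.trans {f g h : R[X]} (hfg : CoeffLE f g) (hgh : CoeffLE g h) : CoeffLE f h :=
  fun n => (hfg n).trans (hgh n)

variable [IsOrderedRing R]

theorem CoeffLE.mul {f f' g g' : R[X]} (hff' : CoeffLE f f') (hgg' : CoeffLE g g')
    (hf : CoeffLE 0 f) (hg : CoeffLE 0 g) : CoeffLE (f * g) (f' * g') := fun n => by
  simp only [coeff_mul]
  exact Finset.sum_le_sum fun p _ => mul_le_mul (hff' _) (hgg' _)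
    (by simpa using hg p.2) ((by simpa using hf p.1 : (0 : R) ≤ _).trans (hff' _))

theorem CoeffLE.nonneg_mul {f g : R[X]} (hf : CoeffLE 0 f) (hg : CoeffLE 0 g) :
    CoeffLE 0 (f * g) := by
  simpa using hf.mul hg (CoeffLE.refl 0) (CoeffLE.refl 0)

theorem CoeffLE.nonneg_pow {f : R[X]} (hf : CoeffLE 0 f) (k : ℕ) : CoeffLE 0 (f ^ k) := by
  induction k with
  | zero => intro n; rw [pow_zero, coeff_one]; split_ifs <;> simp
  | succ k ih => rw [pow_succ]; exact ih.nonneg_mul hf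

theorem CoeffLE.pow {f g : R[X]} (hfg : CoeffLE f g) (hf : CoeffLE 0 f) (k : ℕ) :
    CoeffLE (f ^ k) (g ^ k) := by
  induction k with
  | zero => exact CoeffLE.refl 1
  | succ k ih => simp only [pow_succ]; exact ih.mul hfg (hf.nonneg_pow k) hf

theorem CoeffLE.C_mul {f g : R[X]} {a : R} (ha : 0 ≤ a) (hfg : CoeffLE f g) :
    CoeffLE (C a * f) (C a * g) := fun n => by
  simpa only [coeff_C_mul] using mul_le_mul_of_nonneg_left (hfg n) ha

theorem nonneg_one_add_X_pow (M : ℕ) : CoeffLE 0 ((1 + X : R[X]) ^ M) := fun n => by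
  simp [coeff_one_add_X_pow]

theorem nonneg_one_add_X : CoeffLE 0 (1 + X : R[X]) := by
  simpa using nonneg_one_add_X_pow (R := R) 1

theorem nonneg_X_pow (k : ℕ) : CoeffLE 0 (X ^ k : R[X]) := fun n => by
  rw [coeff_X_pow]; split_ifs <;> simp

theorem nonneg_C_mul_one_add_X_pow {a : R} (ha : 0 ≤ a) (M : ℕ) :
    CoeffLE 0 (C a * (1 + X : R[X]) ^ M) := by
  simpa using (nonneg_one_add_X_pow M).C_mul ha

theorem coeff_le_of_coeffLE_C_mul_one_add_X_pow {f : R[X]} {a : R} {M : ℕ} (ha : 0 ≤ a)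
    (h : CoeffLE f (C a * (1 + X) ^ M)) (n : ℕ) : f.coeff n ≤ a * M ^ n := by
  refine (h n).trans ?_
  rw [coeff_C_mul, coeff_one_add_X_pow]
  exact mul_le_mul_of_nonneg_left (by exact_mod_cast Nat.mono_cast (Nat.choose_le_pow M n)) ha

theorem le_coeff_of_C_mul_one_add_X_pow_coeffLE {f : R[X]} {a : R} {M n : ℕ} (ha : 0 ≤ a)
    (h : CoeffLE (C a * (1 + X) ^ M) f) (hn : n ≤ M) : a ≤ f.coeff n := by
  refine le_trans ?_ (h n)
  rw [coeff_C_mul, coeff_one_add_X_pow]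
  exact le_mul_of_one_le_right ha (by exact_mod_cast Nat.mono_cast (Nat.choose_pos hn))

theorem coeff_le_pow_mul_pow_of_coeffLE {f : R[X]} {b : R} {e E M L n N : ℕ} (hb : 1 ≤ b)
    (h : CoeffLE f (C (b ^ e) * (1 + X) ^ M)) (he : e ≤ E) (hML : M ≤ L) (hL : 1 ≤ L)
    (hn : n ≤ N) : f.coeff n ≤ b ^ E * (L : R) ^ N :=
  calc f.coeff n ≤ b ^ e * (M : R) ^ n :=
        coeff_le_of_coeffLE_C_mul_one_add_X_pow (pow_nonneg (zero_le_one.trans hb) e) h n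
    _ ≤ b ^ E * (L : R) ^ N :=
        mul_le_mul (pow_le_pow_right₀ hb he)
          ((pow_le_pow_left₀ (Nat.cast_nonneg M) (Nat.mono_cast hML) n).trans
            (pow_le_pow_right₀ (by simpa using Nat.mono_cast (α := R) hL) hn))
          (pow_nonneg (Nat.cast_nonneg M) n) (pow_nonneg (zero_le_one.trans hb) E)

theorem le_sum_choose_mul {n N m : ℕ} {c : ℕ → R} (hc : ∀ k ∈ Finset.range N, 0 ≤ c k)
    (hmN : m < N) (hmn : m ≤ n) : c m ≤ ∑ k ∈ Finset.range N, (n.choose k : R) * c k :=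
  calc c m ≤ (n.choose m : R) * c m :=
        le_mul_of_one_le_left (hc m (Finset.mem_range.2 hmN))
          (by exact_mod_cast Nat.mono_cast (Nat.choose_pos hmn))
    _ ≤ ∑ k ∈ Finset.range N, (n.choose k : R) * c k :=
        Finset.single_le_sum (fun k hk => mul_nonneg (Nat.cast_nonneg _) (hc k hk))
          (Finset.mem_range.2 hmN)

theorem sum_choose_mul_le {n N : ℕ} {c : ℕ → R} {b : R} (hN : N ≤ n + 1) (hb : 0 ≤ b)
    (hc : ∀ k ∈ Finset.range N, c k ≤ b) :
    ∑ k ∈ Finset.range N, (n.choose k : R) * c k ≤ 2 ^ n * b :=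
  calc ∑ k ∈ Finset.range N, (n.choose k : R) * c k
      ≤ ∑ k ∈ Finset.range N, (n.choose k : R) * b :=
        Finset.sum_le_sum fun k hk => mul_le_mul_of_nonneg_left (hc k hk) (Nat.cast_nonneg _)
    _ ≤ ∑ k ∈ Finset.range (n + 1), (n.choose k : R) * b :=
        Finset.sum_le_sum_of_subset_of_nonneg (Finset.range_subset_range.2 hN)
          fun k _ _ => mul_nonneg (Nat.cast_nonneg _) hb
    _ = 2 ^ n * b := by
        rw [← Finset.sum_mul, ← Nat.cast_sum, Nat.sum_range_choose, Nat.cast_pow,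
          Nat.cast_ofNat]

end CoeffLE

theorem one_add_X_coeffLE : CoeffLE (1 + X : ℤ[X]) (1 + 3 * X + X ^ 2) := by
  intro n; rcases n with _ | _ | _ | n <;> simp [coeff_one, coeff_X, coeff_X_pow]

theorem coeffLE_one_add_X_pow_three : CoeffLE (1 + 3 * X + X ^ 2 : ℤ[X]) ((1 + X) ^ 3) := by
  intro n
  rcases n with _ | _ | _ | n <;>
    simp [coeff_one, coeff_X, coeff_X_pow, coeff_one_add_X_pow, Nat.choose]

theorem C_two_mul_one_add_X_coeffLE : CoeffLE (C 2 * (1 + X) : ℤ[X]) (2 + 3 * X + X ^ 2) := by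
  intro n; rcases n with _ | _ | _ | n <;> simp [coeff_one, coeff_X, coeff_X_pow]

theorem coeffLE_C_two_mul_one_add_X_sq :
    CoeffLE (2 + 3 * X + X ^ 2 : ℤ[X]) (C 2 * (1 + X) ^ 2) := by
  intro n
  rcases n with _ | _ | _ | n <;> simp [coeff_X, coeff_X_pow, coeff_one_add_X_pow, Nat.choose]

theorem X_mul_Rpoly (t : ℕ) : X * Rpoly t = Ppoly t - (1 + X) ^ t := by
  simpa [Rpoly] using
    (mul_divByMonic_eq_iff_isRoot (a := (0 : ℤ)) (p := Ppoly t - (1 + X) ^ t)).2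
      (by simp [Ppoly])

theorem one_add_X_pow_coeffLE_Ppoly_pow (t a : ℕ) :
    CoeffLE ((1 + X) ^ (t * a)) (Ppoly t ^ a) := by
  simpa only [Ppoly, ← pow_mul] using one_add_X_coeffLE.pow nonneg_one_add_X (t * a)

theorem Ppoly_pow_coeffLE (t a : ℕ) : CoeffLE (Ppoly t ^ a) ((1 + X) ^ (3 * t * a)) := by
  have nonneg := nonneg_one_add_X.trans one_add_X_coeffLE
  simpa only [Ppoly, ← pow_mul, mul_assoc] using coeffLE_one_add_X_pow_three.pow nonneg (t * a)

theorem nonneg_C_two_mul_one_add_X : CoeffLE 0 (C 2 * (1 + X) : ℤ[X]) := by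
  simpa only [mul_zero] using nonneg_one_add_X.C_mul (a := (2 : ℤ)) zero_le_two

theorem C_mul_coeffLE_Qpoly_pow (t a : ℕ) :
    CoeffLE (C (2 ^ (t * a)) * (1 + X) ^ (t * a)) (Qpoly t ^ a) := by
  simpa only [Qpoly, ← pow_mul, mul_pow, C_pow] using
    C_two_mul_one_add_X_coeffLE.pow nonneg_C_two_mul_one_add_X (t * a)

theorem Qpoly_pow_coeffLE (t a : ℕ) :
    CoeffLE (Qpoly t ^ a) (C (2 ^ (t * a)) * (1 + X) ^ (2 * t * a)) := by
  have nonneg := nonneg_C_two_mul_one_add_X.trans C_two_mul_one_add_X_coeffLE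
  simpa only [Qpoly, ← pow_mul, mul_pow, C_pow, mul_assoc, mul_comm 2] using
    coeffLE_C_two_mul_one_add_X_sq.pow nonneg (t * a)

theorem nonneg_Ppoly (t : ℕ) : CoeffLE 0 (Ppoly t) :=
  (nonneg_one_add_X_pow t).trans (by simpa using one_add_X_pow_coeffLE_Ppoly_pow t 1)

theorem nonneg_Qpoly (t : ℕ) : CoeffLE 0 (Qpoly t) :=
  (nonneg_C_mul_one_add_X_pow (a := (2 : ℤ) ^ t) (by positivity) t).trans
    (by simpa using C_mul_coeffLE_Qpoly_pow t 1)

theorem nonneg_X_mul_Rpoly (t : ℕ) : CoeffLE 0 (X * Rpoly t) := fun n => by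
  simpa [X_mul_Rpoly] using one_add_X_pow_coeffLE_Ppoly_pow t 1 n

theorem nonneg_Rpoly (t : ℕ) : CoeffLE 0 (Rpoly t) := fun n => by
  simpa using nonneg_X_mul_Rpoly t (n + 1)

theorem X_mul_Rpoly_coeffLE (t : ℕ) : CoeffLE (X * Rpoly t) ((1 + X) ^ (3 * t)) := fun n => by
  have hP := Ppoly_pow_coeffLE t 1 n
  have hB := nonneg_one_add_X_pow (R := ℤ) t n
  simp only [X_mul_Rpoly, coeff_sub, pow_one, mul_one, coeff_zero] at hP hB ⊢
  linarith

theorem X_mul_Rpoly_pow_coeffLE (t b : ℕ) :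
    CoeffLE ((X * Rpoly t) ^ b) ((1 + X) ^ (3 * t * b)) := by
  simpa only [← pow_mul] using (X_mul_Rpoly_coeffLE t).pow (nonneg_X_mul_Rpoly t) b

theorem C_mul_coeffLE_Ppoly_pow_mul_Qpoly_pow (t a b : ℕ) :
    CoeffLE (C (2 ^ (t * b)) * (1 + X) ^ (t * a + t * b)) (Ppoly t ^ a * Qpoly t ^ b) := by
  have h := (one_add_X_pow_coeffLE_Ppoly_pow t a).mul (C_mul_coeffLE_Qpoly_pow t b)
    (nonneg_one_add_X_pow _) (nonneg_C_mul_one_add_X_pow (by positivity) _)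
  rwa [mul_left_comm, ← pow_add] at h

theorem Ppoly_pow_mul_Qpoly_pow_coeffLE (t a b : ℕ) :
    CoeffLE (Ppoly t ^ a * Qpoly t ^ b) (C (2 ^ (t * b)) * (1 + X) ^ (3 * t * a + 2 * t * b)) := by
  have h := (Ppoly_pow_coeffLE t a).mul (Qpoly_pow_coeffLE t b)
    ((nonneg_Ppoly t).nonneg_pow a) ((nonneg_Qpoly t).nonneg_pow b)
  rwa [mul_left_comm, ← pow_add] at h

theorem Qpoly_pow_mul_X_mul_Rpoly_pow_coeffLE (t a b : ℕ) :
    CoeffLE (Qpoly t ^ a * (X * Rpoly t) ^ b)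
      (C (2 ^ (t * a)) * (1 + X) ^ (2 * t * a + 3 * t * b)) := by
  have h := (Qpoly_pow_coeffLE t a).mul (X_mul_Rpoly_pow_coeffLE t b)
    ((nonneg_Qpoly t).nonneg_pow a) ((nonneg_X_mul_Rpoly t).nonneg_pow b)
  rwa [mul_assoc, ← pow_add] at h

theorem coeff_Upoly (t r : ℕ) : (Upoly t).coeff r =
    ∑ k ∈ Finset.range 4,
      (Nat.choose 3 k : ℤ) * (X ^ k * (Ppoly t ^ (3 - k) * Qpoly t ^ k)).coeff r := by
  simp only [← coeff_C_mul, ← finsetSum_coeff]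
  congr 1
  simp [Upoly, Finset.sum_range_succ, Nat.choose]
  ring

theorem coeff_Vpoly (t r : ℕ) : (Vpoly t).coeff r =
    ∑ k ∈ Finset.range 3,
      (Nat.choose 3 k : ℤ) * (Qpoly t ^ (3 - k) * Rpoly t ^ k).coeff r := by
  simp only [← coeff_C_mul, ← finsetSum_coeff]
  congr 1
  simp [Vpoly, Finset.sum_range_succ, Nat.choose]
  ring

theorem coeff_Upoly_le {t : ℕ} (ht : t ≠ 0) (r : ℕ) :
    (Upoly t).coeff r ≤ 2 ^ 3 * (2 ^ (min r 3 * t) * (9 * t : ℕ) ^ (r + 2)) := by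
  rw [coeff_Upoly]
  refine sum_choose_mul_le le_rfl (by positivity) fun k hk => ?_
  have hk3 : k ≤ 3 := Nat.lt_succ_iff.mp (Finset.mem_range.mp hk)
  rw [coeff_X_pow_mul']
  split_ifs with hkr
  · refine coeff_le_pow_mul_pow_of_coeffLE one_le_two (Ppoly_pow_mul_Qpoly_pow_coeffLE t (3 - k) k)
      ?_ ?_ (by omega) (by omega)
    · rw [mul_comm]; exact Nat.mul_le_mul_right _ (le_min hkr hk3)
    · interval_cases k <;> omega
  · positivity

theorem coeff_Vpoly_le {t : ℕ} (ht : t ≠ 0) (r : ℕ) :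
    (Vpoly t).coeff r ≤ 2 ^ 3 * (2 ^ (3 * t) * (9 * t : ℕ) ^ (r + 2)) := by
  rw [coeff_Vpoly]
  refine sum_choose_mul_le (by norm_num) (by positivity) fun k hk => ?_
  have hk2 : k ≤ 2 := Nat.lt_succ_iff.mp (Finset.mem_range.mp hk)
  have hshift : Qpoly t ^ (3 - k) * (X * Rpoly t) ^ k =
      X ^ k * (Qpoly t ^ (3 - k) * Rpoly t ^ k) := by
    ring
  rw [← coeff_X_pow_mul _ k, ← hshift]
  refine coeff_le_pow_mul_pow_of_coeffLE one_le_two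
    (Qpoly_pow_mul_X_mul_Rpoly_pow_coeffLE t (3 - k) k)
    ?_ ?_ (by omega) (by omega)
  · rw [mul_comm 3]; exact Nat.mul_le_mul_left _ (Nat.sub_le 3 k)
  · interval_cases k <;> omega

theorem two_pow_le_coeff_Upoly {t r : ℕ} (hr : r ≤ 3 * t + 3) :
    2 ^ (min r 3 * t) ≤ (Upoly t).coeff r := by
  set m := min r 3
  have hmr : m ≤ r := min_le_left r 3
  have hm3 : m ≤ 3 := min_le_right r 3
  rw [coeff_Upoly]
  refine le_trans ?_ (le_sum_choose_mul (fun k _ => ?_) (by omega : m < 4) hm3)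
  · rw [coeff_X_pow_mul', if_pos hmr, mul_comm m]
    refine le_coeff_of_C_mul_one_add_X_pow_coeffLE (by positivity)
      (C_mul_coeffLE_Ppoly_pow_mul_Qpoly_pow t (3 - m) m) ?_
    rw [← mul_add, Nat.sub_add_cancel hm3]
    omega
  · exact ((nonneg_X_pow k).nonneg_mul (((nonneg_Ppoly t).nonneg_pow _).nonneg_mul
      ((nonneg_Qpoly t).nonneg_pow _))) r

theorem two_pow_le_coeff_Vpoly {t r : ℕ} (hr : r ≤ 3 * t) :
    2 ^ (3 * t) ≤ (Vpoly t).coeff r := by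
  rw [coeff_Vpoly]
  refine le_trans ?_ (le_sum_choose_mul (fun k _ => ?_) (by norm_num : 0 < 3) (Nat.zero_le 3))
  · simpa [mul_comm 3] using le_coeff_of_C_mul_one_add_X_pow_coeffLE (by positivity)
      (C_mul_coeffLE_Qpoly_pow t 3) (by omega : r ≤ t * 3)
  · exact (((nonneg_Qpoly t).nonneg_pow _).nonneg_mul ((nonneg_Rpoly t).nonneg_pow _)) r

theorem real_bounds_of_int_bounds {a : ℤ} {t K e : ℕ} (ht : t ≠ 0) (hlo : 2 ^ e ≤ a)
    (hhi : a ≤ 2 ^ 3 * (2 ^ e * (9 * t : ℕ) ^ K)) :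
    1 * 2 ^ e / (t : ℝ) ^ K ≤ a ∧ (a : ℝ) ≤ 2 ^ 3 * 9 ^ K * (t : ℝ) ^ K * 2 ^ e := by
  constructor
  · calc 1 * 2 ^ e / (t : ℝ) ^ K ≤ 2 ^ e := by
          rw [one_mul]
          exact div_le_self (by positivity)
            (one_le_pow₀ (by exact_mod_cast Nat.one_le_iff_ne_zero.2 ht))
      _ ≤ a := by exact_mod_cast hlo
  · calc (a : ℝ) ≤ 2 ^ 3 * (2 ^ e * (9 * t : ℕ) ^ K) := by exact_mod_cast hhi
      _ = 2 ^ 3 * 9 ^ K * (t : ℝ) ^ K * 2 ^ e := by push_cast; ring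

/-- For fixed `r ≥ 0`: `[x^r] V_t = 2^{3t} t^{O(1)}` and
`[x^r] U_t = 2^{min(r,3) t} t^{O(1)}`.  Explicitly, there exist `K ≥ 0`, `c, C > 0` and
`t_0` such that for all `t ≥ t_0`,
`c t^{-K} 2^{3t} ≤ [x^r] V_t ≤ C t^K 2^{3t}` and
`c t^{-K} 2^{min(r,3)t} ≤ [x^r] U_t ≤ C t^K 2^{min(r,3)t}`. -/
theorem coeff_U_V_growth (r : ℕ) :
    ∃ (K : ℕ) (c C : ℝ), 0 < c ∧ 0 < C ∧ ∃ t0 : ℕ, ∀ t : ℕ, t0 ≤ t →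
      (c * 2 ^ (3 * t) / (t : ℝ) ^ K ≤ ((Vpoly t).coeff r : ℝ) ∧
        ((Vpoly t).coeff r : ℝ) ≤ C * (t : ℝ) ^ K * 2 ^ (3 * t)) ∧
      (c * 2 ^ (min r 3 * t) / (t : ℝ) ^ K ≤ ((Upoly t).coeff r : ℝ) ∧
        ((Upoly t).coeff r : ℝ) ≤ C * (t : ℝ) ^ K * 2 ^ (min r 3 * t)) := by
  refine ⟨r + 2, 1, 2 ^ 3 * 9 ^ (r + 2), one_pos, by positivity, r + 1, fun t ht => ?_⟩
  have ht0 : t ≠ 0 := by omega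
  exact ⟨real_bounds_of_int_bounds ht0 (two_pow_le_coeff_Vpoly (by omega)) (coeff_Vpoly_le ht0 r),
    real_bounds_of_int_bounds ht0 (two_pow_le_coeff_Upoly (by omega)) (coeff_Upoly_le ht0 r)⟩
end
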